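/- arXiv:1907.04019 — 2 statements merged into one kernel-verified Lean document; each statement's English description precedes it below -/
import Mathlib

section
/- Fix an integer n ≥ 3 and r̃₀ > 0, and set c(r) := u′_{HM,r̃₀}(r) − 2 v′_{HM,r̃₀}(r) − (n−2) w′_{HM,r̃₀}(r) for r > r̃₀. Let v̂ be a C² function on [r̃₀,∞) satisfying v̂″(r) = (c(r) − v̂′(r))·v̂′(r) for all r > r̃₀, with v̂(r̃₀) = 0 and v̂(r) → 0 as r → ∞. Then v̂ ≡ 0. -/
/-!
Put `p := v̂'`. The ODE says `p' = q p` with `q := c - p` continuous on `(r̃₀, ∞)`, so by uniqueness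
for this linear equation `p` vanishes identically as soon as it vanishes at one point. Such a
point exists by Rolle's theorem on `[r̃₀, ∞)`: `v̂(r̃₀) = 0 = lim v̂`, and a function whose
derivative never vanishes is strictly monotone by Darboux. Hence `v̂` is constant, equal to
`v̂(r̃₀) = 0`.
-/

open Set Real Filter Topology

/-- The Horowitz–Myers profile function `u_{HM,r₀}` (with `ℓ = 1`). -/
noncomputable def uHM (n : ℕ) (r₀ r : ℝ) : ℝ :=
  -Real.log r - (1 / 2) * Real.log (1 - (r₀ / r) ^ n)

/-- The Horowitz–Myers profile function `v_{HM,r₀}` (with `ℓ = 1`). -/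
noncomputable def vHM (n : ℕ) (r₀ r : ℝ) : ℝ :=
  Real.log r + (1 / 2) * Real.log (1 - (r₀ / r) ^ n)

/-- The Horowitz–Myers profile function `w_{HM}` (with `ℓ = 1`). -/
noncomputable def wHM (r : ℝ) : ℝ := Real.log r

lemma not_strictMonoOn_Ici_of_tendsto {f : ℝ → ℝ} {a : ℝ}
    (hlim : Tendsto f atTop (𝓝 (f a))) : ¬ StrictMonoOn f (Ici a) := by
  intro hf
  have hlt : f a < f (a + 1) := hf self_mem_Ici (by simp) (lt_add_one a)
  have hle : f (a + 1) ≤ f a := ge_of_tendsto hlim <| (eventually_ge_atTop (a + 1)).mono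
    fun x hx => hf.monotoneOn (by simp) (by simp; linarith) hx
  linarith

lemma exists_deriv_eq_zero_of_tendsto_atTop {f : ℝ → ℝ} {a : ℝ}
    (hfc : ContinuousOn f (Ici a)) (hfd : DifferentiableOn ℝ f (Ioi a))
    (hlim : Tendsto f atTop (𝓝 (f a))) : ∃ c ∈ Ioi a, deriv f c = 0 := by
  by_contra! h
  have hf' : ∀ x ∈ Ioi a, HasDerivWithinAt f (deriv f x) (Ioi a) x := fun x hx =>
    (hfd.differentiableAt (isOpen_Ioi.mem_nhds hx)).hasDerivAt.hasDerivWithinAt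
  rcases hasDerivWithinAt_forall_lt_or_forall_gt_of_forall_ne (convex_Ioi a) hf' h with
    hneg | hpos
  · refine not_strictMonoOn_Ici_of_tendsto hlim.neg ?_
    exact (strictAntiOn_of_deriv_neg (convex_Ici a) hfc (by rwa [interior_Ici])).neg
  · exact not_strictMonoOn_Ici_of_tendsto hlim
      (strictMonoOn_of_deriv_pos (convex_Ici a) hfc (by rwa [interior_Ici]))

lemma eqOn_Ici_of_deriv_eq_zero {f : ℝ → ℝ} {a : ℝ}
    (hfc : ContinuousOn f (Ici a)) (hfd : DifferentiableOn ℝ f (Ioi a))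
    (hf' : ∀ x ∈ Ioi a, deriv f x = 0) : ∀ x ∈ Ici a, f x = f a := by
  rw [← interior_Ici] at hfd hf'
  intro x hx
  exact le_antisymm
    (antitoneOn_of_deriv_nonpos (convex_Ici a) hfc hfd (fun y hy => (hf' y hy).le)
      self_mem_Ici hx hx)
    (monotoneOn_of_deriv_nonneg (convex_Ici a) hfc hfd (fun y hy => (hf' y hy).ge)
      self_mem_Ici hx hx)

lemma eqOn_zero_of_hasDerivAt_mul {p q : ℝ → ℝ} {a x₀ : ℝ} (hq : ContinuousOn q (Ioi a))
    (hp : ∀ x ∈ Ioi a, HasDerivAt p (q x * p x) x) (hx₀ : x₀ ∈ Ioi a) (hpx₀ : p x₀ = 0) :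
    EqOn p 0 (Ioi a) := by
  intro x hx
  obtain ⟨α, β, hα, hxαβ, hx₀αβ⟩ : ∃ α β, a < α ∧ x ∈ Ioo α β ∧ x₀ ∈ Ioo α β := by
    have : a < min x x₀ := lt_min hx hx₀
    refine ⟨(a + min x x₀) / 2, max x x₀ + 1, by linarith, ⟨?_, ?_⟩, ⟨?_, ?_⟩⟩ <;>
      linarith [min_le_left x x₀, min_le_right x x₀, le_max_left x x₀, le_max_right x x₀]
  have hsub : Icc α β ⊆ Ioi a := fun y hy => hα.trans_le hy.1
  obtain ⟨C, hC⟩ := isCompact_Icc.exists_bound_of_continuousOn (hq.mono hsub)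
  have hlip : ∀ t ∈ Ioo α β, LipschitzOnWith C.toNNReal (fun y => q t * y) univ := fun t ht =>
    ((lipschitzWith_smul (q t)).weaken <| by
      rw [← NNReal.coe_le_coe, coe_nnnorm]
      exact (hC t (Ioo_subset_Icc_self ht)).trans (le_coe_toNNReal C)).lipschitzOnWith
  refine ODE_solution_unique_of_mem_Ioo hlip hx₀αβ
    (fun t ht => ⟨hp t (hsub (Ioo_subset_Icc_self ht)), mem_univ _⟩)
    (fun t _ => ⟨by simp, mem_univ _⟩) hpx₀ hxαβ

/-- The coefficient `c(r)` of the ODE. -/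
noncomputable def hmCoeff (n : ℕ) (r₀ r : ℝ) : ℝ :=
  deriv (uHM n r₀) r - 2 * deriv (vHM n r₀) r - ((n : ℝ) - 2) * deriv wHM r

section HorowitzMyers

variable {n : ℕ} {r₀ : ℝ} {k : WithTop ℕ∞}

lemma one_sub_div_pow_pos (hn : n ≠ 0) (h₀ : 0 ≤ r₀) {r : ℝ} (hr : r₀ < r) :
    0 < 1 - (r₀ / r) ^ n := by
  have hr' : 0 < r := h₀.trans_lt hr
  have : (r₀ / r) ^ n < 1 := pow_lt_one₀ (div_nonneg h₀ hr'.le) ((div_lt_one hr').2 hr) hn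
  linarith

lemma contDiffOn_log_Ioi (h₀ : 0 ≤ r₀) : ContDiffOn ℝ k Real.log (Ioi r₀) :=
  Real.contDiffOn_log.mono fun _ hr => (h₀.trans_lt hr).ne'

lemma contDiffOn_log_one_sub_div_pow (hn : n ≠ 0) (h₀ : 0 ≤ r₀) :
    ContDiffOn ℝ k (fun r => Real.log (1 - (r₀ / r) ^ n)) (Ioi r₀) :=
  (contDiffOn_const.sub ((contDiffOn_const.div contDiffOn_id
    fun _ hr => (h₀.trans_lt hr).ne').pow n)).log fun _ hr => (one_sub_div_pow_pos hn h₀ hr).ne'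

lemma contDiffOn_uHM (hn : n ≠ 0) (h₀ : 0 ≤ r₀) : ContDiffOn ℝ k (uHM n r₀) (Ioi r₀) :=
  (contDiffOn_log_Ioi h₀).neg.sub (contDiffOn_const.mul (contDiffOn_log_one_sub_div_pow hn h₀))

lemma contDiffOn_vHM (hn : n ≠ 0) (h₀ : 0 ≤ r₀) : ContDiffOn ℝ k (vHM n r₀) (Ioi r₀) :=
  (contDiffOn_log_Ioi h₀).add (contDiffOn_const.mul (contDiffOn_log_one_sub_div_pow hn h₀))

lemma continuousOn_hmCoeff (hn : n ≠ 0) (h₀ : 0 ≤ r₀) : ContinuousOn (hmCoeff n r₀) (Ioi r₀) := by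
  have hu := (contDiffOn_uHM (k := 1) hn h₀).continuousOn_deriv_of_isOpen isOpen_Ioi le_rfl
  have hv := (contDiffOn_vHM (k := 1) hn h₀).continuousOn_deriv_of_isOpen isOpen_Ioi le_rfl
  have hw := (contDiffOn_log_Ioi (k := 1) h₀).continuousOn_deriv_of_isOpen isOpen_Ioi le_rfl
  exact (hu.sub (continuousOn_const.mul hv)).sub (continuousOn_const.mul hw)

end HorowitzMyers

/-- Rigidity for the ODE `v̂'' = (c - v̂') v̂'`, where
`c = u'_{HM,r̃₀} - 2 v'_{HM,r̃₀} - (n-2) w'_{HM}`: a C² solution on `[r̃₀,∞)`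
with `v̂(r̃₀) = 0` and `v̂(r) → 0` at infinity vanishes identically. -/
theorem stmt_8 (n : ℕ) (hn : 3 ≤ n) (rtil₀ : ℝ) (hrtil₀ : 0 < rtil₀) (vh : ℝ → ℝ)
    (hv : ContDiffOn ℝ 2 vh (Set.Ici rtil₀))
    (hode : ∀ r, rtil₀ < r →
      deriv (deriv vh) r =
        ((deriv (uHM n rtil₀) r - 2 * deriv (vHM n rtil₀) r - ((n : ℝ) - 2) * deriv wHM r) -
            deriv vh r) * deriv vh r)
    (h0 : vh rtil₀ = 0) (hlim : Filter.Tendsto vh Filter.atTop (nhds 0)) :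
    ∀ r ∈ Set.Ici rtil₀, vh r = 0 := by
  have hvI : ContDiffOn ℝ 2 vh (Ioi rtil₀) := hv.mono Ioi_subset_Ici_self
  have hvd : DifferentiableOn ℝ vh (Ioi rtil₀) := hvI.differentiableOn two_ne_zero
  have hv' : ContDiffOn ℝ 1 (deriv vh) (Ioi rtil₀) := hvI.deriv_of_isOpen isOpen_Ioi le_rfl
  have hp : ∀ x ∈ Ioi rtil₀,
      HasDerivAt (deriv vh) ((hmCoeff n rtil₀ x - deriv vh x) * deriv vh x) x := fun x hx => by
    rw [hmCoeff, ← hode x hx]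
    exact ((hv'.differentiableOn one_ne_zero).differentiableAt (isOpen_Ioi.mem_nhds hx)).hasDerivAt
  obtain ⟨x₀, hx₀, hpx₀⟩ := exists_deriv_eq_zero_of_tendsto_atTop hv.continuousOn hvd (h0 ▸ hlim)
  have hp0 : EqOn (deriv vh) 0 (Ioi rtil₀) := eqOn_zero_of_hasDerivAt_mul
    ((continuousOn_hmCoeff (by omega) hrtil₀.le).sub hv'.continuousOn) hp hx₀ hpx₀
  intro r hr
  rw [eqOn_Ici_of_deriv_eq_zero hv.continuousOn hvd hp0 r hr, h0]
end

section
/- Fix an integer n ≥ 3, reals ℓ > 0, r₀ > 0, and let f(r) = (r²/ℓ²)(1 − (r₀/r)ⁿ). Let h be a C¹ function on [r₀,∞) with h(r) = O(r^{−n}) and h′(r) = O(r^{−n−1}) as r → ∞. Then ∫_{r₀}^∞ ( f(r) h′(r)² − f″(r) h(r)² ) r^{n−1} dr ≥ 0. -/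
/-!
With `g = f r^{n-2} h²` one has, pointwise on `(r₀, ∞)`,
`(f h'² - f'' h²) r^{n-1} + g' = f r^{n-1} (h' + h/r)² + ((n-3) + (n²-3n+3)(r₀/r)ⁿ) r^{n-1} h²/ℓ²`,
which is nonnegative since `n ≥ 3` and `0 ≤ f`. As `f(r₀) = 0` and `g = O(r^{-n})`, the integral of
`g'` over `(r₀, ∞)` vanishes, so the integral in question is that of a nonnegative function.
-/

open Filter MeasureTheory

/-- The Horowitz–Myers radial profile `f(r) = (r²/ℓ²)(1 - (r₀/r)ⁿ)`. -/
noncomputable def fHM (n : ℕ) (ℓ r₀ r : ℝ) : ℝ := r ^ 2 / ℓ ^ 2 * (1 - (r₀ / r) ^ n)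

open Set Asymptotics Topology

theorem setIntegral_Ioi_nonneg_of_add_deriv_nonneg {φ g g' : ℝ → ℝ} {a : ℝ}
    (hga : 0 ≤ g a) (hcont : ContinuousWithinAt g (Ici a) a)
    (hderiv : ∀ x ∈ Ioi a, HasDerivAt g (g' x) x) (hg' : IntegrableOn g' (Ioi a))
    (hlim : Tendsto g atTop (𝓝 0)) (hpos : ∀ x ∈ Ioi a, 0 ≤ φ x + g' x) :
    0 ≤ ∫ x in Ioi a, φ x := by
  by_cases hφ : IntegrableOn φ (Ioi a)
  · have hsum := setIntegral_nonneg (μ := volume) measurableSet_Ioi hpos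
    rw [integral_add hφ hg', integral_Ioi_of_hasDerivAt_of_tendsto hcont hderiv hg' hlim] at hsum
    linarith
  · rw [integral_undef hφ]

theorem Asymptotics.IsBigO.mul_rpow_atTop {f g : ℝ → ℝ} {a b c : ℝ}
    (hf : f =O[atTop] fun x => x ^ a) (hg : g =O[atTop] fun x => x ^ b) (hc : a + b = c) :
    (fun x => f x * g x) =O[atTop] fun x => x ^ c :=
  (hf.mul hg).trans_eventuallyEq <| by
    filter_upwards [eventually_gt_atTop 0] with x hx
    rw [← hc, Real.rpow_add hx]

theorem isBigO_pow_rpow_atTop (k : ℕ) : (fun x : ℝ => x ^ k) =O[atTop] fun x => x ^ (k : ℝ) :=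
  (isBigO_refl _ _).congr_right fun x => (Real.rpow_natCast x k).symm

theorem isBigO_div_pow_one_atTop (c : ℝ) (n : ℕ) :
    (fun x : ℝ => (c / x) ^ n) =O[atTop] fun _ => (1 : ℝ) :=
  ((tendsto_const_nhds.div_atTop tendsto_id).pow n).isBigO_one ℝ

theorem hasDerivAt_div_pow (c : ℝ) (n : ℕ) {x : ℝ} (hx : x ≠ 0) :
    HasDerivAt (fun y => (c / y) ^ n) (-n * (c / x) ^ n / x) x := by
  have := ((hasDerivAt_inv hx).const_mul c).fun_pow n
  simp only [← div_eq_mul_inv] at this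
  refine this.congr_deriv ?_
  cases n with
  | zero => simp
  | succ k =>
    simp only [div_pow, Nat.add_sub_cancel]
    field_simp
    ring

noncomputable def fHMDeriv (n : ℕ) (ℓ r₀ r : ℝ) : ℝ := r * (2 + (n - 2) * (r₀ / r) ^ n) / ℓ ^ 2

section HorowitzMyers

variable {n : ℕ} {ℓ r₀ x : ℝ}

theorem hasDerivAt_fHM (hx : x ≠ 0) : HasDerivAt (fHM n ℓ r₀) (fHMDeriv n ℓ r₀ x) x := by
  have := ((hasDerivAt_pow 2 x).div_const (ℓ ^ 2)).fun_mul
    ((hasDerivAt_div_pow r₀ n hx).const_sub 1)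
  refine this.congr_deriv ?_
  simp only [fHMDeriv]
  field_simp
  ring

theorem hasDerivAt_fHMDeriv (hx : x ≠ 0) :
    HasDerivAt (fHMDeriv n ℓ r₀) ((2 - (n - 1) * (n - 2) * (r₀ / x) ^ n) / ℓ ^ 2) x := by
  have := ((hasDerivAt_id x).fun_mul
    (((hasDerivAt_div_pow r₀ n hx).const_mul (n - 2 : ℝ)).const_add 2)).div_const (ℓ ^ 2)
  refine this.congr_deriv ?_
  simp only [id]
  field_simp
  ring

theorem deriv_deriv_fHM (hx : x ≠ 0) :
    deriv (deriv (fHM n ℓ r₀)) x = (2 - (n - 1) * (n - 2) * (r₀ / x) ^ n) / ℓ ^ 2 := by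
  have : deriv (fHM n ℓ r₀) =ᶠ[𝓝 x] fHMDeriv n ℓ r₀ := by
    filter_upwards [eventually_ne_nhds hx] with y hy using (hasDerivAt_fHM hy).deriv
  rw [this.deriv_eq, (hasDerivAt_fHMDeriv hx).deriv]

theorem fHM_self (hr₀ : r₀ ≠ 0) : fHM n ℓ r₀ r₀ = 0 := by
  simp [fHM, div_self hr₀]

theorem fHM_nonneg (hr₀ : 0 ≤ r₀) (hx : r₀ ≤ x) : 0 ≤ fHM n ℓ r₀ x := by
  have hx0 : 0 ≤ x := hr₀.trans hx
  refine mul_nonneg (by positivity) (sub_nonneg.2 (pow_le_one₀ (by positivity) ?_))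
  exact div_le_one_of_le₀ hx hx0

theorem isBigO_fHM (n : ℕ) (ℓ r₀ : ℝ) : fHM n ℓ r₀ =O[atTop] fun x => x ^ (2 : ℝ) := by
  have := ((isBigO_pow_rpow_atTop 2).const_mul_left (ℓ ^ 2)⁻¹).mul_rpow_atTop
    (((isBigO_const_one ℝ (1 : ℝ) atTop).sub (isBigO_div_pow_one_atTop r₀ n)).congr_right
      fun x => (Real.rpow_zero x).symm) (by norm_num : (2 : ℝ) + 0 = 2)
  refine this.congr_left fun x => ?_
  rw [fHM]; ring

theorem isBigO_fHMDeriv (n : ℕ) (ℓ r₀ : ℝ) : fHMDeriv n ℓ r₀ =O[atTop] fun x => x ^ (1 : ℝ) := by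
  have := ((isBigO_pow_rpow_atTop 1).const_mul_left (ℓ ^ 2)⁻¹).mul_rpow_atTop
    (((isBigO_const_one ℝ (2 : ℝ) atTop).add ((isBigO_div_pow_one_atTop r₀ n).const_mul_left
      (n - 2 : ℝ))).congr_right fun x => (Real.rpow_zero x).symm)
    (by norm_num : ((1 : ℕ) : ℝ) + 0 = 1)
  refine this.congr_left fun x => ?_
  rw [fHMDeriv]; ring

noncomputable def boundaryTerm (n : ℕ) (ℓ r₀ : ℝ) (h : ℝ → ℝ) (r : ℝ) : ℝ :=
  fHM n ℓ r₀ r * r ^ (n - 2) * h r ^ 2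

noncomputable def boundaryTermDeriv (n : ℕ) (ℓ r₀ : ℝ) (h h' : ℝ → ℝ) (r : ℝ) : ℝ :=
  (fHMDeriv n ℓ r₀ r * r ^ (n - 2) + (n - 2 : ℕ) * fHM n ℓ r₀ r * r ^ (n - 3)) * h r ^ 2
    + 2 * fHM n ℓ r₀ r * r ^ (n - 2) * h r * h' r

variable {h h' : ℝ → ℝ}

theorem hasDerivAt_boundaryTerm (hx : x ≠ 0) (hh : HasDerivAt h (h' x) x) :
    HasDerivAt (boundaryTerm n ℓ r₀ h) (boundaryTermDeriv n ℓ r₀ h h' x) x := by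
  have := ((hasDerivAt_fHM (n := n) (ℓ := ℓ) (r₀ := r₀) hx).fun_mul
    (hasDerivAt_pow (n - 2) x)).fun_mul (hh.fun_pow 2)
  refine this.congr_deriv ?_
  simp only [boundaryTermDeriv, Nat.sub_sub]
  push_cast
  ring

theorem boundaryTerm_self (hr₀ : r₀ ≠ 0) : boundaryTerm n ℓ r₀ h r₀ = 0 := by
  simp [boundaryTerm, fHM_self hr₀]

theorem continuousWithinAt_boundaryTerm (hr₀ : r₀ ≠ 0) (hh : ContinuousWithinAt h (Ici r₀) r₀) :
    ContinuousWithinAt (boundaryTerm n ℓ r₀ h) (Ici r₀) r₀ :=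
  (((hasDerivAt_fHM hr₀).continuousAt.continuousWithinAt).mul
    (continuous_pow _).continuousWithinAt).mul (hh.pow 2)

theorem continuousOn_boundaryTermDeriv {s : Set ℝ} (hs : (0 : ℝ) ∉ s) (hh : ContinuousOn h s)
    (hh' : ContinuousOn h' s) : ContinuousOn (boundaryTermDeriv n ℓ r₀ h h') s := by
  have hf : ContinuousOn (fHM n ℓ r₀) s := fun x hx =>
    (hasDerivAt_fHM (ne_of_mem_of_not_mem hx hs)).continuousAt.continuousWithinAt
  have hf' : ContinuousOn (fHMDeriv n ℓ r₀) s := fun x hx =>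
    (hasDerivAt_fHMDeriv (ne_of_mem_of_not_mem hx hs)).continuousAt.continuousWithinAt
  unfold boundaryTermDeriv
  fun_prop

theorem isBigO_boundaryTerm (hn : 2 ≤ n) (hO : h =O[atTop] fun x => x ^ (-(n : ℝ))) :
    boundaryTerm n ℓ r₀ h =O[atTop] fun x => x ^ (-(n : ℝ)) := by
  have hO2 := (hO.mul_rpow_atTop hO rfl).congr_left fun x => (sq (h x)).symm
  refine (((isBigO_fHM n ℓ r₀).mul_rpow_atTop (isBigO_pow_rpow_atTop (n - 2)) rfl).mul_rpow_atTop
    hO2 ?_)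
  push_cast [hn]
  ring

theorem isBigO_boundaryTermDeriv (hn : 3 ≤ n) (hO : h =O[atTop] fun x => x ^ (-(n : ℝ)))
    (hO' : h' =O[atTop] fun x => x ^ (-(n : ℝ) - 1)) :
    boundaryTermDeriv n ℓ r₀ h h' =O[atTop] fun x => x ^ (-(n : ℝ) - 1) := by
  have hc2 : ((n - 2 : ℕ) : ℝ) = n - 2 := by rw [Nat.cast_sub (by omega)]; norm_num
  have hc3 : ((n - 3 : ℕ) : ℝ) = n - 3 := by rw [Nat.cast_sub hn]; norm_num
  have hO2 := (hO.mul_rpow_atTop hO rfl).congr_left fun x => (sq (h x)).symm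
  have h1 := ((isBigO_fHMDeriv n ℓ r₀).mul_rpow_atTop (isBigO_pow_rpow_atTop (n - 2)) rfl
    ).mul_rpow_atTop hO2 (c := -(n : ℝ) - 1) (by rw [hc2]; ring)
  have h2 := ((isBigO_fHM n ℓ r₀).mul_rpow_atTop (isBigO_pow_rpow_atTop (n - 3)) rfl
    ).mul_rpow_atTop hO2 (c := -(n : ℝ) - 1) (by rw [hc3]; ring)
  have h3 := (((isBigO_fHM n ℓ r₀).mul_rpow_atTop (isBigO_pow_rpow_atTop (n - 2)) rfl
    ).mul_rpow_atTop hO rfl).mul_rpow_atTop hO' (c := -(n : ℝ) - 1) (by rw [hc2]; ring)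
  refine ((h1.add (h2.const_mul_left ((n - 2 : ℕ) : ℝ))).add (h3.const_mul_left 2)).congr_left
    fun x => ?_
  simp only [boundaryTermDeriv]
  ring

theorem integrand_add_boundaryTermDeriv_nonneg (hn : 3 ≤ n) (hr₀ : 0 ≤ r₀) (hx : r₀ < x) :
    0 ≤ (fHM n ℓ r₀ x * h' x ^ 2 - deriv (deriv (fHM n ℓ r₀)) x * h x ^ 2) * x ^ (n - 1)
      + boundaryTermDeriv n ℓ r₀ h h' x := by
  have hx0 : 0 < x := hr₀.trans_lt hx
  have hf := fHM_nonneg (n := n) (ℓ := ℓ) hr₀ hx.le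
  have hu : 0 ≤ (r₀ / x) ^ n := by positivity
  rw [deriv_deriv_fHM hx0.ne']
  obtain ⟨m, rfl⟩ := Nat.exists_eq_add_of_le' hn
  have key : (fHM (m + 3) ℓ r₀ x * h' x ^ 2
        - (2 - ((m + 3 : ℕ) - 1) * ((m + 3 : ℕ) - 2) * (r₀ / x) ^ (m + 3)) / ℓ ^ 2 * h x ^ 2)
        * x ^ (m + 3 - 1) + boundaryTermDeriv (m + 3) ℓ r₀ h h' x
      = fHM (m + 3) ℓ r₀ x * x ^ (m + 2) * (h' x + h x / x) ^ 2
        + x ^ (m + 2) * (m + (m ^ 2 + 3 * m + 3) * (r₀ / x) ^ (m + 3)) / ℓ ^ 2 * h x ^ 2 := by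
    simp only [boundaryTermDeriv, fHM, fHMDeriv, Nat.add_sub_cancel,
      show m + 3 - 1 = m + 2 by omega, show m + 3 - 2 = m + 1 by omega]
    push_cast
    field_simp
    ring
  rw [key]
  have : 0 ≤ x ^ (m + 2) * (m + (m ^ 2 + 3 * m + 3) * (r₀ / x) ^ (m + 3)) / ℓ ^ 2 := by positivity
  positivity

theorem integrableOn_boundaryTermDeriv (hn : 3 ≤ n) (hr₀ : 0 < r₀)
    (hC1 : ContDiffOn ℝ 1 h (Ici r₀)) (hO : h =O[atTop] fun x => x ^ (-(n : ℝ)))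
    (hO' : deriv h =O[atTop] fun x => x ^ (-(n : ℝ) - 1)) :
    IntegrableOn (boundaryTermDeriv n ℓ r₀ h (deriv h)) (Ioi r₀) := by
  have hderiv : EqOn (derivWithin h (Ici r₀)) (deriv h) (Ioi r₀) := fun x hx =>
    derivWithin_of_mem_nhds (Ici_mem_nhds hx)
  have hcont : ContinuousOn (boundaryTermDeriv n ℓ r₀ h (derivWithin h (Ici r₀))) (Ici r₀) :=
    continuousOn_boundaryTermDeriv (fun h0 => hr₀.not_ge h0) hC1.continuousOn
      (hC1.continuousOn_derivWithin (uniqueDiffOn_Ici r₀) le_rfl)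
  have hO'' : derivWithin h (Ici r₀) =O[atTop] fun x => x ^ (-(n : ℝ) - 1) :=
    hO'.congr' (eventually_gt_atTop r₀ |>.mono fun x hx => (hderiv hx).symm) EventuallyEq.rfl
  have hs : -(n : ℝ) - 1 < -1 := by
    have : (3 : ℝ) ≤ n := by exact_mod_cast hn
    linarith
  have hint := (hcont.locallyIntegrableOn measurableSet_Ici).integrableOn_of_isBigO_atTop
    (isBigO_boundaryTermDeriv hn hO hO'') (integrableAtFilter_rpow_atTop_iff.2 hs)
  refine (hint.mono_set Ioi_subset_Ici_self).congr_fun (fun x hx => ?_) measurableSet_Ioi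
  simp only [boundaryTermDeriv, hderiv hx]

end HorowitzMyers

theorem stmt_13_general (n : ℕ) (hn : 3 ≤ n) (ℓ r₀ : ℝ) (hr₀ : 0 < r₀)
    (h : ℝ → ℝ) (hC1 : ContDiffOn ℝ 1 h (Set.Ici r₀))
    (hO : h =O[atTop] fun r => r ^ (-(n : ℝ)))
    (hO' : deriv h =O[atTop] fun r => r ^ (-(n : ℝ) - 1)) :
    0 ≤ ∫ r in Set.Ioi r₀,
        (fHM n ℓ r₀ r * deriv h r ^ 2 - deriv (deriv (fHM n ℓ r₀)) r * h r ^ 2) *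
          r ^ (n - 1) := by
  have hderiv : ∀ x ∈ Ioi r₀, HasDerivAt h (deriv h x) x := fun x hx =>
    (hC1.differentiableOn one_ne_zero).hasDerivAt (Ici_mem_nhds hx)
  have hlim : Tendsto (boundaryTerm n ℓ r₀ h) atTop (𝓝 0) :=
    (isBigO_boundaryTerm (hn.trans' (by norm_num)) hO).trans_tendsto
      (tendsto_rpow_neg_atTop (by positivity))
  exact setIntegral_Ioi_nonneg_of_add_deriv_nonneg (boundaryTerm_self hr₀.ne').ge
    (continuousWithinAt_boundaryTerm hr₀.ne' (hC1.continuousOn r₀ self_mem_Ici))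
    (fun x hx => hasDerivAt_boundaryTerm (hr₀.trans hx).ne' (hderiv x hx))
    (integrableOn_boundaryTermDeriv hn hr₀ hC1 hO hO') hlim
    (fun x hx => integrand_add_boundaryTermDeriv_nonneg hn hr₀.le hx)

/-- Non-negativity of `∫ (f h'² - f'' h²) r^{n-1} dr`: the contribution of the
off-diagonal perturbation component to the second-order mass. -/
theorem stmt_13 (n : ℕ) (hn : 3 ≤ n) (ℓ r₀ : ℝ) (hℓ : 0 < ℓ) (hr₀ : 0 < r₀)
    (h : ℝ → ℝ) (hC1 : ContDiffOn ℝ 1 h (Set.Ici r₀))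
    (hO : h =O[atTop] fun r => r ^ (-(n : ℝ)))
    (hO' : deriv h =O[atTop] fun r => r ^ (-(n : ℝ) - 1)) :
    0 ≤ ∫ r in Set.Ioi r₀,
        (fHM n ℓ r₀ r * deriv h r ^ 2 - deriv (deriv (fHM n ℓ r₀)) r * h r ^ 2) *
          r ^ (n - 1) :=
  stmt_13_general n hn ℓ r₀ hr₀ h hC1 hO hO'
end
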